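/- Let L be the Lie algebra over ℂ with basis {e_0, e_1, e_2, ...} and nonzero brackets [e_0, e_i] = e_{i-1} = -[e_i, e_0] for i ≥ 3 (all other brackets of basis vectors are zero). Then L is residually solvable (⋂_{i≥1} L^[i] = 0) but not residually nilpotent (⋂_{i≥1} L^i ≠ 0). -/
import Mathlib


noncomputable section

/-- The underlying space: finitely supported families, `e_n = Finsupp.single n 1`. -/
abbrev V : Type := ℕ →₀ ℂ

/-- The linear map sending `e_n ↦ e_{n-1}` for `n ≥ 3` and `e_n ↦ 0` otherwise. -/
def shd : V →ₗ[ℂ] V :=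
  Finsupp.lsum ℂ fun n => if 3 ≤ n then (Finsupp.lsingle (n - 1) : ℂ →ₗ[ℂ] V) else 0

/-- The bracket of the Lie algebra with `[e_0, e_n] = e_{n-1} = -[e_n, e_0]` for `n ≥ 3`
(all other brackets of basis vectors zero). -/
def br7 (f g : V) : V := f 0 • shd g - g 0 • shd f

/-- Span of brackets of elements of `A` with elements of `B`. -/
def bracketSpan (br : V → V → V) (A B : Set V) : Submodule ℂ V :=
  Submodule.span ℂ {z : V | ∃ a ∈ A, ∃ b ∈ B, z = br a b}

/-- Lower central series, zero-based: `lcs br k = L^{k+1}`. -/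
def lcs (br : V → V → V) : ℕ → Submodule ℂ V
  | 0 => ⊤
  | k + 1 => bracketSpan br (lcs br k) Set.univ

/-- Derived series, zero-based: `ds br s = L^[s+1]`. -/
def ds (br : V → V → V) : ℕ → Submodule ℂ V
  | 0 => ⊤
  | s + 1 => bracketSpan br (ds br s) (ds br s)

lemma shd_single (n : ℕ) (c : ℂ) :
    shd (Finsupp.single n c) = if 3 ≤ n then Finsupp.single (n - 1) c else 0 := by
  simp [shd]
  split_ifs <;> simp

lemma shd_apply_zero (x : V) : shd x 0 = 0 := by
  have : shd x = x.sum fun n c =>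
      ((if 3 ≤ n then (Finsupp.lsingle (n - 1) : ℂ →ₗ[ℂ] V) else 0) c) := by
    simp [shd, Finsupp.lsum_apply]
  rw [this, Finsupp.sum_apply]
  apply Finset.sum_eq_zero
  intro n _
  simp only []
  split_ifs with h
  · simp [Finsupp.single_apply]
    omega
  · simp

lemma br7_apply_zero (a b : V) : br7 a b 0 = 0 := by
  simp [br7, shd_apply_zero]

lemma ds1_le : ds br7 1 ≤ LinearMap.ker (Finsupp.lapply (0 : ℕ) : V →ₗ[ℂ] ℂ) := by
  show bracketSpan br7 ⊤ ⊤ ≤ _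
  rw [bracketSpan, Submodule.span_le]
  rintro z ⟨a, -, b, -, rfl⟩
  simp [LinearMap.mem_ker, br7_apply_zero]

lemma ds2_bot : ds br7 2 = ⊥ := by
  show bracketSpan br7 (ds br7 1) (ds br7 1) = ⊥
  rw [bracketSpan, Submodule.span_eq_bot]
  rintro z ⟨a, ha, b, hb, rfl⟩
  have ha0 : a 0 = 0 := ds1_le ha
  have hb0 : b 0 = 0 := ds1_le hb
  simp [br7, ha0, hb0]

lemma e_mem_lcs : ∀ (k n : ℕ), 2 ≤ n → (Finsupp.single n 1 : V) ∈ lcs br7 k := by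
  intro k
  induction k with
  | zero => intro n _; exact Submodule.mem_top
  | succ k ih =>
    intro n hn
    have key : br7 (Finsupp.single (n+1) 1) (Finsupp.single 0 (-1)) =
        (Finsupp.single n 1 : V) := by
      have h3 : 3 ≤ n + 1 := by omega
      simp [br7, shd_single, h3, Finsupp.single_apply]
    have : (Finsupp.single n 1 : V) ∈
        {z : V | ∃ a ∈ (lcs br7 k : Set V), ∃ b ∈ Set.univ, z = br7 a b} :=
      ⟨Finsupp.single (n+1) 1, ih (n+1) (by omega), Finsupp.single 0 (-1), trivial, key.symm⟩
    exact Submodule.subset_span this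

/-- The bracket `[e_0, e_i] = e_{i-1}` (`i ≥ 3`) defines a Lie algebra which is
residually solvable but not residually nilpotent. -/
theorem stmt7 :
    (∀ a b c : V, br7 (a + b) c = br7 a c + br7 b c) ∧
    (∀ a b c : V, br7 a (b + c) = br7 a b + br7 a c) ∧
    (∀ (t : ℂ) (a b : V), br7 (t • a) b = t • br7 a b) ∧
    (∀ (t : ℂ) (a b : V), br7 a (t • b) = t • br7 a b) ∧
    (∀ a : V, br7 a a = 0) ∧
    (∀ a b c : V, br7 a (br7 b c) + br7 b (br7 c a) + br7 c (br7 a b) = 0) ∧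
    (⨅ i : ℕ, ds br7 i) = ⊥ ∧
    (⨅ i : ℕ, lcs br7 i) ≠ ⊥ := by
  refine ⟨?_, ?_, ?_, ?_, ?_, ?_, ?_, ?_⟩
  · intro a b c; simp only [br7, map_add, Finsupp.add_apply, add_smul, smul_add]; module
  · intro a b c; simp only [br7, map_add, Finsupp.add_apply, add_smul, smul_add]; module
  · intro t a b; simp only [br7, map_smul, Finsupp.smul_apply, smul_eq_mul, mul_smul, smul_sub]; module
  · intro t a b; simp only [br7, map_smul, Finsupp.smul_apply, smul_eq_mul, mul_smul, smul_sub]; module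
  · intro a; simp [br7]
  · intro a b c
    simp only [br7, br7_apply_zero, map_sub, map_smul, zero_smul, sub_zero, smul_sub, smul_smul]
    have h1 : br7 b c 0 = 0 := br7_apply_zero b c
    have h2 : br7 c a 0 = 0 := br7_apply_zero c a
    have h3 : br7 a b 0 = 0 := br7_apply_zero a b
    simp only [br7] at h1 h2 h3 ⊢
    rw [h1, h2, h3]
    simp only [zero_smul, sub_zero, map_sub, map_smul, smul_sub, smul_smul]
    module
  · refine le_bot_iff.mp (le_trans (iInf_le _ 2) ?_)
    rw [ds2_bot]
  · intro h
    have hm : (Finsupp.single 2 1 : V) ∈ ⨅ i : ℕ, lcs br7 i := by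
      rw [Submodule.mem_iInf]; intro i; exact e_mem_lcs i 2 le_rfl
    rw [h, Submodule.mem_bot] at hm
    simpa using Finsupp.single_eq_zero.mp hm
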